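/- arXiv:1401.3708 — 4 statements merged into one kernel-verified Lean document; each statement's English description precedes it below -/
import Mathlib

section
/- For every n ≥ 2, if x, x' ∈ ℝⁿ are rational points with den(x) = den(x'), then x and x' lie in the same 𝒢_n-orbit; consequently, for every rational x ∈ ℝⁿ, orb(x) = {x' ∈ ℝⁿ : G_{x'} = G_x}. -/
/-- `y` is in the `GL(n,ℤ) ⋉ ℤⁿ`-orbit of `x`, i.e. `y = U x + t` for an integer
matrix `U` with `det U = ±1` and an integer vector `t`. -/
def SameOrbit (n : ℕ) (x y : Fin n → ℝ) : Prop :=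
  ∃ (U : Matrix (Fin n) (Fin n) ℤ) (t : Fin n → ℤ),
    (U.det = 1 ∨ U.det = -1) ∧
    ∀ i, y i = (∑ j, (U i j : ℝ) * x j) + (t i : ℝ)

/-- The subgroup `G_x = ℤ + ℤx₁ + ⋯ + ℤxₙ` of the additive reals. -/
def Gx {n : ℕ} (x : Fin n → ℝ) : AddSubgroup ℝ :=
  AddSubgroup.closure (insert (1 : ℝ) (Set.range x))

/-- A point of `ℝⁿ` is rational if all its coordinates are rational. -/
def IsRationalPoint {n : ℕ} (y : Fin n → ℝ) : Prop :=
  ∀ i, ∃ q : ℚ, y i = (q : ℝ)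

/-- The denominator of a rational point: the least positive integer `d`
with `d • y ∈ ℤⁿ`. -/
noncomputable def den {n : ℕ} (y : Fin n → ℝ) : ℕ :=
  sInf {d : ℕ | 0 < d ∧ ∀ i, ∃ m : ℤ, (d : ℝ) * y i = (m : ℝ)}

/-- The homogeneous correspondent `ỹ = den(y)·(y,1)`, viewed as a real vector. -/
noncomputable def tildeR {n : ℕ} (y : Fin n → ℝ) : Fin (n + 1) → ℝ :=
  fun i => (den y : ℝ) * (Fin.snoc y (1 : ℝ) : Fin (n + 1) → ℝ) i

/-- A rational `m`-simplex `conv(v₀,…,v_m) ⊆ ℝⁿ` is regular if the homogeneous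
correspondents `ṽ₀,…,ṽ_m ∈ ℤ^{n+1}` can be extended to a ℤ-basis of `ℤ^{n+1}`. -/
def IsRegularSimplex {n m : ℕ} (v : Fin (m + 1) → (Fin n → ℝ)) : Prop :=
  AffineIndependent ℝ v ∧ (∀ k, IsRationalPoint (v k)) ∧
  ∃ (b : Module.Basis (Fin (n + 1)) ℤ (Fin (n + 1) → ℤ)) (f : Fin (m + 1) ↪ Fin (n + 1)),
    ∀ k i, ((b (f k)) i : ℝ) = tildeR (v k) i

/-- A rational hyperplane in `ℝⁿ`. -/
def IsRatHyperplane {n : ℕ} (H : Set (Fin n → ℝ)) : Prop :=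
  ∃ (h : Fin n → ℚ) (k : ℚ), h ≠ 0 ∧ H = {z | (∑ i, (h i : ℝ) * z i) = (k : ℝ)}

/-- A rational affine space: an intersection of rational hyperplanes. -/
def IsRatAffineSpace {n : ℕ} (F : Set (Fin n → ℝ)) : Prop :=
  ∃ S : Set (Set (Fin n → ℝ)), (∀ H ∈ S, IsRatHyperplane H) ∧ F = ⋂₀ S

/-- `F_x`: the intersection of all rational hyperplanes containing `x`
(`= ℝⁿ` if there is no such hyperplane). -/
def Fx {n : ℕ} (x : Fin n → ℝ) : Set (Fin n → ℝ) :=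
  ⋂₀ {H | IsRatHyperplane H ∧ x ∈ H}

/-- The (affine) dimension of a subset of `ℝⁿ`. -/
noncomputable def affDim {n : ℕ} (F : Set (Fin n → ℝ)) : ℕ :=
  Module.finrank ℝ ↥(vectorSpan ℝ F)

/-- `d_F`: the least denominator of a rational point of `F`. -/
noncomputable def dF {n : ℕ} (F : Set (Fin n → ℝ)) : ℕ :=
  sInf {d : ℕ | ∃ y ∈ F, IsRationalPoint y ∧ den y = d}

/-- `c_F`: the smallest possible denominator of a vertex of a regular `n`-simplex
`conv(v₀,…,v_n) ⊆ ℝⁿ` with `v₀,…,v_e ∈ F`. -/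
noncomputable def cF {n : ℕ} (e : ℕ) (F : Set (Fin n → ℝ)) : ℕ :=
  sInf {c : ℕ | ∃ (v : Fin (n + 1) → (Fin n → ℝ)) (i : Fin (n + 1)),
    IsRegularSimplex v ∧ (∀ k : Fin (n + 1), (k : ℕ) ≤ e → v k ∈ F) ∧ den (v i) = c}

/-- `c_x = c_{F_x}`. -/
noncomputable def cx {n : ℕ} (x : Fin n → ℝ) : ℕ := cF (affDim (Fx x)) (Fx x)

/-- Membership in the Farey sequence `𝔉_d`. -/
def InFarey (d : ℕ) (x : ℚ) : Prop := 0 ≤ x ∧ x ≤ 1 ∧ x.den ≤ d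

/-- `x` and `y` are neighbors (contiguous elements) of the Farey sequence `𝔉_d`. -/
def FareyNeighbor (d : ℕ) (x y : ℚ) : Prop :=
  InFarey d x ∧ InFarey d y ∧ x ≠ y ∧
  ∀ t : ℚ, InFarey d t → ¬ (min x y < t ∧ t < max x y)

/-- `y` is the companion of `x`: `comp 0 = 1`, `comp 1 = 0`, `comp (1/2) = 1`, and
for denominator `d ≥ 3`, `comp x` is the neighbor of `x` in `𝔉_d` with smaller
denominator than the other neighbor. -/
def IsCompanion (x y : ℚ) : Prop :=
  (x = 0 ∧ y = 1) ∨ (x = 1 ∧ y = 0) ∨ (x = 1/2 ∧ y = 1) ∨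
  (3 ≤ x.den ∧ FareyNeighbor x.den x y ∧
    ∀ z : ℚ, FareyNeighbor x.den x z → z ≠ y → y.den < z.den)

/-!
Write a rational point as `x = a / d` with `a ∈ ℤⁿ` and `d = den x`, so that `d` and the entries
of `a` have no common divisor `> 1`. Integer shears `x ↦ x + xᵢ • v` (with `vᵢ = 0`) and integer
translations run a Euclidean algorithm on the numerators: if a positive numerator `r = aᵢ` does not
divide some `aⱼ`, replace `aⱼ` by `aⱼ % r ∈ (0, r)`; if it divides all of them but not `d`,
translating a second coordinate by `1` (this is where `n ≥ 2` enters) adds `d` to its numerator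
and creates such a `j`; and if `r` divides `d` as well, minimality of `d` forces `r = 1`, and the
other numerators can be cleared. Thus every rational point lies in the orbit of `eₖ / den x`.
Finally `G_x` is an orbit invariant, equal to `(den x)⁻¹ ℤ` for rational `x`, so it determines
`den x`.
-/

section

open Matrix

variable {n : ℕ}

theorem intCast_mulVec_intCast (U : Matrix (Fin n) (Fin n) ℤ) (t : Fin n → ℤ) :
    (Int.castRingHom ℝ).mapMatrix U *ᵥ (Int.cast ∘ t) = Int.cast ∘ (U *ᵥ t) :=
  funext fun i => (RingHom.map_mulVec (Int.castRingHom ℝ) U t i).symm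

namespace SameOrbit

theorem iff_exists_isUnit {x y : Fin n → ℝ} :
    SameOrbit n x y ↔ ∃ U : Matrix (Fin n) (Fin n) ℤ, IsUnit U ∧
      ∃ t : Fin n → ℤ, y = (Int.castRingHom ℝ).mapMatrix U *ᵥ x + Int.cast ∘ t := by
  simp only [SameOrbit, isUnit_iff_isUnit_det, Int.isUnit_iff, funext_iff, Pi.add_apply,
    mulVec, dotProduct, RingHom.mapMatrix_apply, map_apply, Function.comp_apply,
    eq_intCast]
  exact exists_congr fun U => ⟨fun ⟨t, hU, h⟩ => ⟨hU, t, h⟩, fun ⟨hU, t, h⟩ => ⟨t, hU, h⟩⟩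

theorem refl (x : Fin n → ℝ) : SameOrbit n x x :=
  iff_exists_isUnit.2 ⟨1, isUnit_one, 0, by simp⟩

theorem symm {x y : Fin n → ℝ} (h : SameOrbit n x y) : SameOrbit n y x := by
  obtain ⟨_, ⟨U, rfl⟩, t, rfl⟩ := iff_exists_isUnit.1 h
  refine iff_exists_isUnit.2 ⟨↑U⁻¹, Units.isUnit _, -(↑U⁻¹ *ᵥ t), ?_⟩
  rw [mulVec_add, mulVec_mulVec, ← map_mul, Units.inv_mul, map_one, one_mulVec,
    intCast_mulVec_intCast]
  ext i
  simp

theorem trans {x y z : Fin n → ℝ} (h₁ : SameOrbit n x y) (h₂ : SameOrbit n y z) :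
    SameOrbit n x z := by
  obtain ⟨U, hU, t, rfl⟩ := iff_exists_isUnit.1 h₁
  obtain ⟨V, hV, s, rfl⟩ := iff_exists_isUnit.1 h₂
  refine iff_exists_isUnit.2 ⟨V * U, hV.mul hU, V *ᵥ t + s, ?_⟩
  rw [mulVec_add, mulVec_mulVec, ← map_mul, intCast_mulVec_intCast, add_assoc]
  ext i
  simp

end SameOrbit

theorem sameOrbit_add_intCast (x : Fin n → ℝ) (t : Fin n → ℤ) :
    SameOrbit n x (x + Int.cast ∘ t) :=
  SameOrbit.iff_exists_isUnit.2 ⟨1, isUnit_one, t, by simp⟩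

theorem sameOrbit_add_smul (x : Fin n → ℝ) {i : Fin n} {v : Fin n → ℤ} (hv : v i = 0) :
    SameOrbit n x (x + x i • Int.cast ∘ v) := by
  refine SameOrbit.iff_exists_isUnit.2 ⟨1 + vecMulVec v (Pi.single i 1), ?_, 0, ?_⟩
  · rw [isUnit_iff_isUnit_det, vecMulVec_eq Unit, det_one_add_replicateCol_mul_replicateRow]
    simp [hv]
  · rw [map_add, map_one, add_mulVec, one_mulVec]
    ext j
    simp [mulVec, dotProduct, vecMulVec, Pi.single_apply, mul_comm]

def IsCommonDenom (d : ℕ) (x : Fin n → ℝ) : Prop :=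
  0 < d ∧ ∀ i, ∃ m : ℤ, (d : ℝ) * x i = m

theorem IsCommonDenom.den_le {d : ℕ} {x : Fin n → ℝ} (h : IsCommonDenom d x) : den x ≤ d :=
  Nat.sInf_le h

theorem IsCommonDenom.isRationalPoint {d : ℕ} {x : Fin n → ℝ} (h : IsCommonDenom d x) :
    IsRationalPoint x := by
  intro i
  obtain ⟨m, hm⟩ := h.2 i
  refine ⟨m / d, ?_⟩
  have hd : (d : ℝ) ≠ 0 := by exact_mod_cast h.1.ne'
  push_cast
  rw [← hm]
  field_simp

theorem IsRationalPoint.exists_isCommonDenom {x : Fin n → ℝ} (hx : IsRationalPoint x) :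
    ∃ d, IsCommonDenom d x := by
  choose q hq using hx
  refine ⟨∏ i, (q i).den, Finset.prod_pos fun i _ => (q i).pos, fun i => ?_⟩
  obtain ⟨k, hk⟩ := Finset.dvd_prod_of_mem (fun i => (q i).den) (Finset.mem_univ i)
  refine ⟨(q i).num * k, ?_⟩
  have hden : ((q i).den : ℝ) ≠ 0 := by positivity
  rw [hq, hk, Rat.cast_def]
  push_cast
  field_simp

theorem IsRationalPoint.isCommonDenom_den {x : Fin n → ℝ} (hx : IsRationalPoint x) :
    IsCommonDenom (den x) x :=
  Nat.sInf_mem hx.exists_isCommonDenom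

theorem SameOrbit.isCommonDenom {d : ℕ} {x y : Fin n → ℝ} (h : SameOrbit n x y)
    (hx : IsCommonDenom d x) : IsCommonDenom d y := by
  obtain ⟨U, t, -, hy⟩ := h
  choose m hm using hx.2
  refine ⟨hx.1, fun i => ⟨∑ j, U i j * m j + d * t i, ?_⟩⟩
  push_cast
  rw [hy]
  simp only [mul_add, Finset.mul_sum, ← hm]
  ring_nf

theorem SameOrbit.den_eq {x y : Fin n → ℝ} (h : SameOrbit n x y) (hx : IsRationalPoint x) :
    den y = den x := by
  have hy := h.isCommonDenom hx.isCommonDenom_den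
  exact le_antisymm hy.den_le (h.symm.isCommonDenom hy.isRationalPoint.isCommonDenom_den).den_le

noncomputable def ratPoint (a : Fin n → ℤ) (d : ℕ) : Fin n → ℝ := fun i => a i / d

theorem isCommonDenom_ratPoint (a : Fin n → ℤ) {d : ℕ} (hd : 0 < d) :
    IsCommonDenom d (ratPoint a d) := by
  have hd' : (d : ℝ) ≠ 0 := by exact_mod_cast hd.ne'
  exact ⟨hd, fun i => ⟨a i, mul_div_cancel₀ _ hd'⟩⟩

theorem IsCommonDenom.exists_eq_ratPoint {d : ℕ} {x : Fin n → ℝ} (h : IsCommonDenom d x) :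
    ∃ a, x = ratPoint a d := by
  choose a ha using h.2
  have hd : (d : ℝ) ≠ 0 := by exact_mod_cast h.1.ne'
  refine ⟨a, funext fun i => ?_⟩
  rw [ratPoint, ← ha]
  field_simp

theorem eq_one_of_dvd_of_den_ratPoint {a : Fin n → ℤ} {d g : ℕ} (hd : 0 < d)
    (hden : den (ratPoint a d) = d) (hgd : g ∣ d) (hga : ∀ i, (g : ℤ) ∣ a i) : g = 1 := by
  obtain ⟨e, rfl⟩ := hgd
  have hg : 0 < g := Nat.pos_of_mul_pos_right hd
  have he : 0 < e := Nat.pos_of_mul_pos_left hd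
  have hcd : IsCommonDenom e (ratPoint a (g * e)) := by
    refine ⟨he, fun i => ?_⟩
    obtain ⟨m, hm⟩ := hga i
    refine ⟨m, ?_⟩
    have : (g : ℝ) ≠ 0 := by positivity
    have : (e : ℝ) ≠ 0 := by positivity
    simp only [ratPoint, hm]
    push_cast
    field_simp
  have := hcd.den_le
  rw [hden] at this
  nlinarith

theorem sameOrbit_ratPoint_add_smul (a : Fin n → ℤ) (d : ℕ) {i : Fin n} {v : Fin n → ℤ}
    (hv : v i = 0) : SameOrbit n (ratPoint a d) (ratPoint (a + a i • v) d) := by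
  convert sameOrbit_add_smul (ratPoint a d) hv using 1
  ext j
  simp only [ratPoint, Pi.add_apply, Pi.smul_apply, smul_eq_mul, Function.comp_apply]
  push_cast
  ring

theorem sameOrbit_ratPoint_add_nsmul (a : Fin n → ℤ) {d : ℕ} (hd : d ≠ 0) (t : Fin n → ℤ) :
    SameOrbit n (ratPoint a d) (ratPoint (a + (d : ℤ) • t) d) := by
  convert sameOrbit_add_intCast (ratPoint a d) t using 1
  have hd' : (d : ℝ) ≠ 0 := by exact_mod_cast hd
  ext j
  simp only [ratPoint, Pi.add_apply, Pi.smul_apply, smul_eq_mul, Function.comp_apply]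
  push_cast
  field_simp

theorem sameOrbit_ratPoint_update_emod (a : Fin n → ℤ) (d : ℕ) {i j : Fin n} (hij : i ≠ j) :
    SameOrbit n (ratPoint a d) (ratPoint (Function.update a j (a j % a i)) d) := by
  convert sameOrbit_ratPoint_add_smul a d (v := Pi.single j (-(a j / a i)))
    (Pi.single_eq_of_ne hij _) using 2
  ext k
  rcases eq_or_ne k j with rfl | hk
  · simp [Int.emod_def, sub_eq_add_neg]
  · simp [hk]

theorem sameOrbit_ratPoint_single (d : ℕ) (i k : Fin n) :
    SameOrbit n (ratPoint (Pi.single i 1) d) (ratPoint (Pi.single k 1) d) := by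
  rcases eq_or_ne i k with rfl | hik
  · exact .refl _
  have h₁ := sameOrbit_ratPoint_add_smul (Pi.single i 1) d (Pi.single_eq_of_ne hik (1 : ℤ))
  have h₂ := sameOrbit_ratPoint_add_smul (Pi.single i 1 + Pi.single k 1 : Fin n → ℤ) d
    (Pi.single_eq_of_ne hik.symm (-1 : ℤ))
  have e₁ : (Pi.single i 1 + (Pi.single i 1 : Fin n → ℤ) i • Pi.single k 1 : Fin n → ℤ) =
      Pi.single i 1 + Pi.single k 1 := by simp
  have e₂ : (Pi.single i 1 + Pi.single k 1 + (Pi.single i 1 + Pi.single k 1 : Fin n → ℤ) k •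
      Pi.single i (-1) : Fin n → ℤ) = Pi.single k 1 := by
    ext l
    by_cases hl : l = i <;> simp_all [Pi.single_apply]
  rw [e₁] at h₁
  rw [e₂] at h₂
  exact h₁.trans h₂

theorem exists_sameOrbit_ratPoint_pos_lt (d : ℕ) {a : Fin n → ℤ} {i j : Fin n} (hai : 0 < a i)
    (hj : ¬ a i ∣ a j) :
    ∃ b : Fin n → ℤ, SameOrbit n (ratPoint a d) (ratPoint b d) ∧ 0 < b j ∧ b j < a i := by
  have hij : i ≠ j := by rintro rfl; exact hj dvd_rfl
  refine ⟨_, sameOrbit_ratPoint_update_emod a d hij, ?_⟩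
  rw [Function.update_self]
  exact ⟨(Int.emod_nonneg _ hai.ne').lt_of_ne fun h => hj (Int.dvd_of_emod_eq_zero h.symm),
    Int.emod_lt_of_pos _ hai⟩

theorem exists_sameOrbit_ratPoint_single_of_pos (hn : 2 ≤ n) {d : ℕ} (hd : 0 < d) (r : ℕ) :
    ∀ (a : Fin n → ℤ) (i : Fin n), den (ratPoint a d) = d → a i = r → 0 < r →
      ∃ k, SameOrbit n (ratPoint a d) (ratPoint (Pi.single k 1) d) := by
  induction r using Nat.strong_induction_on with
  | _ r ih =>
  intro a i hden hai hr
  have euclid_step : ∀ b : Fin n → ℤ, SameOrbit n (ratPoint a d) (ratPoint b d) → b i = r →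
      (∃ j, ¬ (r : ℤ) ∣ b j) → ∃ k, SameOrbit n (ratPoint a d) (ratPoint (Pi.single k 1) d) := by
    rintro b hab hbi ⟨j, hj⟩
    obtain ⟨c, hbc, hcj, hcj'⟩ :=
      exists_sameOrbit_ratPoint_pos_lt d (a := b) (hbi ▸ Int.natCast_pos.2 hr) (hbi ▸ hj)
    have hac := hab.trans hbc
    have hden' : den (ratPoint c d) = d :=
      (hac.den_eq (isCommonDenom_ratPoint a hd).isRationalPoint).trans hden
    obtain ⟨k, hk⟩ := ih (c j).toNat (by omega) c j hden' (by omega) (by omega)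
    exact ⟨k, hac.trans hk⟩
  by_cases hdiv : ∀ j, (r : ℤ) ∣ a j
  · by_cases hrd : r ∣ d
    · have hr1 : r = 1 := eq_one_of_dvd_of_den_ratPoint hd hden hrd hdiv
      refine ⟨i, ?_⟩
      convert sameOrbit_ratPoint_add_smul a d (i := i) (v := fun j => if j = i then 0 else -a j)
        (by simp) using 2
      ext j
      by_cases hj : j = i <;> simp [hj, hai, hr1]
    · obtain ⟨j, hji⟩ := Fintype.exists_ne_of_one_lt_card (by simp; omega) i
      refine euclid_step _ (sameOrbit_ratPoint_add_nsmul a hd.ne' (Pi.single j 1))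
        (by simp [hji.symm, hai]) ⟨j, fun h => hrd ?_⟩
      simp only [Pi.add_apply, Pi.smul_apply, Pi.single_eq_same, smul_eq_mul, mul_one] at h
      exact_mod_cast (dvd_add_right (hdiv j)).1 h
  · exact euclid_step a (.refl _) hai (not_forall.1 hdiv)

theorem IsRationalPoint.exists_sameOrbit_ratPoint_single (hn : 2 ≤ n) {x : Fin n → ℝ}
    (hx : IsRationalPoint x) : ∃ k, SameOrbit n x (ratPoint (Pi.single k 1) (den x)) := by
  have hcd := hx.isCommonDenom_den
  obtain ⟨a, ha⟩ := hcd.exists_eq_ratPoint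
  let i : Fin n := ⟨0, by omega⟩
  have hxb := sameOrbit_ratPoint_add_nsmul a hcd.1.ne' (Pi.single i (|a i| + 1))
  rw [← ha] at hxb
  have hpos : 0 < (a + (den x : ℤ) • Pi.single i (|a i| + 1) : Fin n → ℤ) i := by
    have hd : (1 : ℤ) ≤ den x := by exact_mod_cast hcd.1
    simp only [Pi.add_apply, Pi.smul_apply, Pi.single_eq_same, smul_eq_mul]
    nlinarith [neg_abs_le (a i), abs_nonneg (a i)]
  obtain ⟨k, hk⟩ := exists_sameOrbit_ratPoint_single_of_pos hn hcd.1 _ _ i (hxb.den_eq hx)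
    (Int.toNat_of_nonneg hpos.le).symm (by omega)
  exact ⟨k, hxb.trans hk⟩

theorem mem_Gx (x : Fin n → ℝ) (i : Fin n) : x i ∈ Gx x :=
  AddSubgroup.subset_closure (Set.mem_insert_of_mem _ (Set.mem_range_self i))

theorem intCast_mem_Gx (x : Fin n → ℝ) (m : ℤ) : (m : ℝ) ∈ Gx x := by
  simpa using AddSubgroup.zsmul_mem (Gx x) (AddSubgroup.subset_closure (Set.mem_insert _ _)) m

theorem SameOrbit.Gx_le {x y : Fin n → ℝ} (h : SameOrbit n x y) : Gx y ≤ Gx x := by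
  obtain ⟨U, t, -, hy⟩ := h
  rw [Gx, AddSubgroup.closure_le, Set.insert_subset_iff, Set.range_subset_iff]
  refine ⟨by simpa using intCast_mem_Gx x 1, fun i => ?_⟩
  rw [hy i]
  refine add_mem (sum_mem fun j _ => ?_) (intCast_mem_Gx x _)
  simpa using AddSubgroup.zsmul_mem _ (mem_Gx x j) (U i j)

theorem SameOrbit.Gx_eq {x y : Fin n → ℝ} (h : SameOrbit n x y) : Gx y = Gx x :=
  le_antisymm h.Gx_le h.symm.Gx_le

theorem Gx_ratPoint_single {d : ℕ} (hd : d ≠ 0) (k : Fin n) :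
    Gx (ratPoint (Pi.single k 1) d) = AddSubgroup.zmultiples (d : ℝ)⁻¹ := by
  have hd' : (d : ℝ) ≠ 0 := by exact_mod_cast hd
  refine le_antisymm ?_ (AddSubgroup.zmultiples_le.2 ?_)
  · rw [Gx, AddSubgroup.closure_le, Set.insert_subset_iff, Set.range_subset_iff]
    refine ⟨⟨d, ?_⟩, fun j => ⟨(Pi.single k 1 : Fin n → ℤ) j, ?_⟩⟩
    · simp [hd']
    · simp [ratPoint, div_eq_mul_inv]
  · simpa [ratPoint] using mem_Gx (ratPoint (Pi.single k 1) d) k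

theorem IsRationalPoint.Gx_eq_zmultiples (hn : 2 ≤ n) {x : Fin n → ℝ} (hx : IsRationalPoint x) :
    Gx x = AddSubgroup.zmultiples (den x : ℝ)⁻¹ := by
  obtain ⟨k, hk⟩ := hx.exists_sameOrbit_ratPoint_single hn
  rw [← hk.Gx_eq, Gx_ratPoint_single hx.isCommonDenom_den.1.ne']

theorem isCommonDenom_of_forall_mem_zmultiples {d : ℕ} {x : Fin n → ℝ} (hd : 0 < d)
    (h : ∀ i, x i ∈ AddSubgroup.zmultiples (d : ℝ)⁻¹) : IsCommonDenom d x := by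
  have hd' : (d : ℝ) ≠ 0 := by exact_mod_cast hd.ne'
  refine ⟨hd, fun i => ?_⟩
  obtain ⟨m, hm⟩ := AddSubgroup.mem_zmultiples_iff.1 (h i)
  exact ⟨m, by rw [← hm, zsmul_eq_mul]; field_simp⟩

theorem sameOrbit_of_den_eq (hn : 2 ≤ n) {x x' : Fin n → ℝ} (hx : IsRationalPoint x)
    (hx' : IsRationalPoint x') (h : den x = den x') : SameOrbit n x x' := by
  obtain ⟨k, hk⟩ := hx.exists_sameOrbit_ratPoint_single hn
  obtain ⟨k', hk'⟩ := hx'.exists_sameOrbit_ratPoint_single hn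
  rw [h] at hk
  exact hk.trans ((sameOrbit_ratPoint_single _ k k').trans hk'.symm)

theorem sameOrbit_of_Gx_eq (hn : 2 ≤ n) {x y : Fin n → ℝ} (hx : IsRationalPoint x)
    (h : Gx y = Gx x) : SameOrbit n x y := by
  have hy : IsCommonDenom (den x) y := isCommonDenom_of_forall_mem_zmultiples
    hx.isCommonDenom_den.1 fun i => hx.Gx_eq_zmultiples hn ▸ h ▸ mem_Gx y i
  have hy' := hy.isRationalPoint
  have hx' : IsCommonDenom (den y) x := isCommonDenom_of_forall_mem_zmultiples
    hy'.isCommonDenom_den.1 fun i => hy'.Gx_eq_zmultiples hn ▸ h.symm ▸ mem_Gx x i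
  exact sameOrbit_of_den_eq hn hx hy' (le_antisymm hx'.den_le hy.den_le)

end

/-- For every `n ≥ 2`, rational points of `ℝⁿ` with the same
denominator lie in the same `𝒢ₙ`-orbit; consequently, for every rational `x ∈ ℝⁿ`,
`orb(x) = {x' : G_{x'} = G_x}`. -/
theorem rational_orbit_classification (n : ℕ) (hn : 2 ≤ n) :
    (∀ x x' : Fin n → ℝ, IsRationalPoint x → IsRationalPoint x' →
      den x = den x' → SameOrbit n x x') ∧
    (∀ x : Fin n → ℝ, IsRationalPoint x →
      {y | SameOrbit n x y} = {x' | Gx x' = Gx x}) :=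
  ⟨fun _ _ => sameOrbit_of_den_eq hn, fun _ hx =>
    Set.ext fun _ => ⟨SameOrbit.Gx_eq, sameOrbit_of_Gx_eq hn hx⟩⟩
end

section
/- Let ξ ∈ [0,1] be irrational, a = (1/5, ξ) and b = (2/5, ξ). Then G_a = G_b, but there is no γ ∈ 𝒢₂ with γ(a) = b. -/
/-!
If `γ(p, ξ) = (q, ξ)` with `p, q` rational and `ξ` irrational, comparing the coefficients of `ξ`
forces the rows of `U` to be `(*, 0)` and `(*, 1)`; then `det U = ±1` makes the first row `(±1, 0)`,
so `q = ±p + k` with `k ∈ ℤ`, and `2/5 ≠ ±1/5 + k`. The groups coincide because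
`1/5 = 3 · 2/5 - 1` and `2/5 = 2 · 1/5`.
-/

theorem one_mem_Gx {n : ℕ} (x : Fin n → ℝ) : (1 : ℝ) ∈ Gx x :=
  AddSubgroup.subset_closure (Set.mem_insert _ _)

theorem apply_mem_Gx {n : ℕ} (x : Fin n → ℝ) (i : Fin n) : x i ∈ Gx x :=
  AddSubgroup.subset_closure (Set.mem_insert_of_mem _ ⟨i, rfl⟩)

theorem Gx_le_Gx_iff {n m : ℕ} {x : Fin n → ℝ} {y : Fin m → ℝ} :
    Gx x ≤ Gx y ↔ ∀ i, x i ∈ Gx y := by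
  refine ⟨fun h i => h (apply_mem_Gx x i), fun h => ?_⟩
  rw [Gx, AddSubgroup.closure_le]
  rintro _ (rfl | ⟨i, rfl⟩)
  exacts [one_mem_Gx y, h i]

theorem Irrational.eq_zero_of_intCast_mul_eq_ratCast {ξ : ℝ} (hξ : Irrational ξ) {m : ℤ} {q : ℚ}
    (h : (m : ℝ) * ξ = q) : m = 0 := by
  by_contra hm
  exact (hξ.intCast_mul hm).ne_rat q h

theorem SameOrbit.exists_int_eq_add_or_eq_neg_add {p q : ℚ} {ξ : ℝ} (hξ : Irrational ξ)
    (h : SameOrbit 2 ![(p : ℝ), ξ] ![(q : ℝ), ξ]) : ∃ k : ℤ, q = p + k ∨ q = -p + k := by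
  obtain ⟨U, t, hdet, heq⟩ := h
  have h0 := heq 0
  have h1 := heq 1
  simp only [Fin.sum_univ_two, Matrix.cons_val_zero, Matrix.cons_val_one] at h0 h1
  have hU11 : U 1 1 - 1 = 0 :=
    hξ.eq_zero_of_intCast_mul_eq_ratCast (q := -(U 1 0 * p + t 1)) (by push_cast; linarith)
  have hU01 : U 0 1 = 0 :=
    hξ.eq_zero_of_intCast_mul_eq_ratCast (q := q - U 0 0 * p - t 0) (by push_cast; linarith)
  have hq : q = U 0 0 * p + t 0 := by
    rw [hU01] at h0
    exact_mod_cast (by simpa using h0 : (q : ℝ) = U 0 0 * p + t 0)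
  rw [Matrix.det_fin_two, hU01, show U 1 1 = 1 by omega] at hdet
  have hU00 : U 0 0 = 1 ∨ U 0 0 = -1 := by simpa using hdet
  refine ⟨t 0, ?_⟩
  rcases hU00 with hU00 | hU00 <;> simp [hq, hU00]

theorem same_group_not_same_orbit_general (ξ : ℝ)
    (hirr : Irrational ξ) :
    Gx ![(1/5 : ℝ), ξ] = Gx ![(2/5 : ℝ), ξ] ∧
    ¬ SameOrbit 2 ![(1/5 : ℝ), ξ] ![(2/5 : ℝ), ξ] := by
  constructor
  · apply le_antisymm <;> refine Gx_le_Gx_iff.2 (Fin.forall_fin_two.2 ⟨?_, apply_mem_Gx _ 1⟩)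
    · convert sub_mem (zsmul_mem (apply_mem_Gx ![(2/5 : ℝ), ξ] 0) 3) (one_mem_Gx _) using 1
      norm_num
    · convert zsmul_mem (apply_mem_Gx ![(1/5 : ℝ), ξ] 0) 2 using 1
      norm_num
  · intro h
    obtain ⟨k, hk | hk⟩ := SameOrbit.exists_int_eq_add_or_eq_neg_add (p := 1/5) (q := 2/5) hirr
      (by push_cast; exact h)
    · have : (5 * k : ℤ) = 1 := by exact_mod_cast (by linarith : (5 * k : ℚ) = 1)
      omega
    · have : (5 * k : ℤ) = 3 := by exact_mod_cast (by linarith : (5 * k : ℚ) = 3)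
      omega

/-- For irrational `ξ ∈ [0,1]`, the points `a = (1/5, ξ)` and
`b = (2/5, ξ)` satisfy `G_a = G_b`, yet no `γ ∈ 𝒢₂` maps `a` to `b`. -/
theorem same_group_not_same_orbit (ξ : ℝ) (hmem : ξ ∈ Set.Icc (0 : ℝ) 1)
    (hirr : Irrational ξ) :
    Gx ![(1/5 : ℝ), ξ] = Gx ![(2/5 : ℝ), ξ] ∧
    ¬ SameOrbit 2 ![(1/5 : ℝ), ξ] ![(2/5 : ℝ), ξ] :=
  same_group_not_same_orbit_general ξ hirr
end

section
/- Let n ≥ 1, 0 ≤ m ≤ n, and let T = conv(v₀,…,v_m) be an m-simplex in ℝⁿ with rational vertices. Then T is regular if and only if the half-open parallelepiped P_T = {x ∈ ℝ^{n+1} : x = Σ_{i=0}^m λ_i ṽ_i, 0 ≤ λ_i < 1} contains no nonzero integer point. -/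
/-!
Put `wₖ = ṽₖ ∈ ℤ^{n+1}`; affine independence of the `vₖ` makes the `wₖ` linearly independent
over `ℝ`. If the `wₖ` are part of a `ℤ`-basis `b`, the coordinate forms of `b`, extended to
`ℝ^{n+1}`, show that the coefficients `λₖ` of a lattice point `∑ λₖ wₖ` are integers; in `[0, 1)`
they vanish. Conversely, if the half-open parallelepiped has no nonzero lattice point, then for a
lattice point `∑ μₖ wₖ` the lattice point `∑ (μₖ - ⌊μₖ⌋) wₖ` lies in it and is therefore `0`. So the
`ℤ`-span `L` of the `wₖ` is saturated, `ℤ^{n+1} ⧸ L` is torsion-free, hence free, `L` is a direct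
summand, and a basis of `L` extends to one of `ℤ^{n+1}` by a basis of a complement.
-/

open Module

theorem Module.Basis.exists_extending_of_isTorsionFree_quotient {R M ι κ : Type*} [CommRing R]
    [IsDomain R] [IsPrincipalIdealRing R] [AddCommGroup M] [Module R M] [Module.Free R M]
    [Module.Finite R M] [Fintype ι] [Fintype κ] (hκ : Fintype.card κ = finrank R M)
    {w : ι → M} (hw : LinearIndependent R w)
    [IsTorsionFree R (M ⧸ Submodule.span R (Set.range w))] :
    ∃ (b : Basis κ R M) (f : ι ↪ κ), ∀ k, b (f k) = w k := by
  set L := Submodule.span R (Set.range w)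
  -- `M ⧸ L` is torsion-free, hence free, hence projective, so `L.mkQ` splits
  obtain ⟨s, hs⟩ := L.mkQ.exists_rightInverse_of_surjective (Submodule.range_mkQ L)
  obtain ⟨e, he⟩ :=
    (LinearMap.exact_subtype_mkQ L).splitSurjectiveEquiv L.injective_subtype ⟨s, hs⟩
  let bL : Basis ι R L := .span hw
  let bQ := Free.chooseBasis R (M ⧸ L)
  have hcard : Fintype.card (ι ⊕ Free.ChooseBasisIndex R (M ⧸ L)) = Fintype.card κ := by
    rw [hκ, e.finrank_eq, finrank_prod, finrank_eq_card_basis bL,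
      finrank_eq_card_chooseBasisIndex, Fintype.card_sum]
  let σ := Fintype.equivOfCardEq hcard
  refine ⟨((bL.prod bQ).map e.symm).reindex σ, Function.Embedding.inl.trans σ.toEmbedding,
    fun k => ?_⟩
  have hk : e.symm (bL k, 0) = w k := by
    have := LinearMap.congr_fun he.1 (bL k)
    simp only [Submodule.subtype_apply, LinearMap.comp_apply, LinearMap.inl_apply,
      LinearEquiv.coe_coe] at this
    rw [← this, Basis.span_apply]
  simpa using hk

section IntegerLattice

variable {ι κ : Type*}

theorem LinearIndependent.of_intCast {w : ι → κ → ℤ}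
    (hw : LinearIndependent ℝ fun k => (Int.cast ∘ w k : κ → ℝ)) : LinearIndependent ℤ w :=
  LinearIndependent.of_comp ((Int.castAddHom ℝ).toIntLinearMap.compLeft κ) (hw.restrict_scalars' ℤ)

section LinearForm

variable [Fintype κ] [DecidableEq κ]

def LinearMap.realExtension (φ : (κ → ℤ) →ₗ[ℤ] ℤ) : (κ → ℝ) →ₗ[ℝ] ℝ :=
  ∑ j, (φ (Pi.single j 1) : ℝ) • LinearMap.proj j

theorem LinearMap.realExtension_intCast (φ : (κ → ℤ) →ₗ[ℤ] ℤ) (z : κ → ℤ) :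
    φ.realExtension (Int.cast ∘ z) = φ z := by
  conv_rhs => rw [pi_eq_sum_univ' z, map_sum]
  simp only [map_smul, smul_eq_mul, Int.cast_sum, Int.cast_mul]
  simp [realExtension, mul_comm]

end LinearForm

variable [Fintype ι]

/-- The half-open parallelepiped `{∑ λₖ wₖ : 0 ≤ λₖ < 1} ⊆ ℝ^κ` contains no nonzero point of
`ℤ^κ`. -/
def IsEmptyParallelepiped (w : ι → κ → ℤ) : Prop :=
  ∀ (z : κ → ℤ) (lam : ι → ℝ), (∀ k, 0 ≤ lam k ∧ lam k < 1) →
    Int.cast ∘ z = ∑ k, lam k • (Int.cast ∘ w k : κ → ℝ) → z = 0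

theorem isEmptyParallelepiped_iff (w : ι → κ → ℤ) :
    IsEmptyParallelepiped w ↔
      ∀ z : κ → ℝ, (∀ i, ∃ c : ℤ, z i = c) → z ≠ 0 →
        ¬ ∃ lam : ι → ℝ, (∀ k, 0 ≤ lam k ∧ lam k < 1) ∧ z = ∑ k, lam k • (Int.cast ∘ w k) := by
  constructor
  · rintro h z hz hz0 ⟨lam, hlam, rfl⟩
    choose c hc using hz
    have hc' : Int.cast ∘ c = ∑ k, lam k • (Int.cast ∘ w k : κ → ℝ) := funext fun i => (hc i).symm
    exact hz0 (by simp [← hc', h c lam hlam hc'])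
  · intro h z lam hlam hz
    by_contra hz0
    refine h _ (fun i => ⟨z i, rfl⟩) ?_ ⟨lam, hlam, hz⟩
    exact fun h0 => hz0 (funext fun i => by simpa using congrFun h0 i)

theorem IsEmptyParallelepiped.mem_span {w : ι → κ → ℤ} (hw : IsEmptyParallelepiped w)
    {z : κ → ℤ} {μ : ι → ℝ} (hz : Int.cast ∘ z = ∑ k, μ k • (Int.cast ∘ w k : κ → ℝ)) :
    z ∈ Submodule.span ℤ (Set.range w) := by
  have hfract : z - ∑ k, ⌊μ k⌋ • w k = 0 := by
    refine hw _ (fun k => Int.fract (μ k)) (fun k => ⟨Int.fract_nonneg _, Int.fract_lt_one _⟩) ?_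
    funext i
    have hzi := congrFun hz i
    simp only [Function.comp_apply, Pi.sub_apply, Finset.sum_apply, Pi.smul_apply,
      smul_eq_mul] at hzi ⊢
    push_cast
    rw [hzi, ← Finset.sum_sub_distrib]
    exact Finset.sum_congr rfl fun k _ => by rw [Int.fract]; ring
  rw [sub_eq_zero.1 hfract]
  exact Submodule.sum_mem _ fun k _ => Submodule.smul_mem _ _ (Submodule.subset_span ⟨k, rfl⟩)

theorem IsEmptyParallelepiped.isTorsionFree_quotient {w : ι → κ → ℤ}
    (hw : IsEmptyParallelepiped w) :
    IsTorsionFree ℤ ((κ → ℤ) ⧸ Submodule.span ℤ (Set.range w)) := by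
  refine .of_smul_eq_zero fun c q hcq => or_iff_not_imp_left.2 fun hc => ?_
  obtain ⟨z, rfl⟩ := Submodule.Quotient.mk_surjective _ q
  rw [← Submodule.Quotient.mk_smul, Submodule.Quotient.mk_eq_zero] at hcq
  rw [Submodule.Quotient.mk_eq_zero]
  obtain ⟨a, ha⟩ := (Submodule.mem_span_range_iff_exists_fun ℤ).1 hcq
  refine hw.mem_span (μ := fun k => a k / c) (funext fun i => ?_)
  have hci : ∑ k, (a k : ℝ) * w k i = c * z i := by
    simpa using congrArg (Int.cast : ℤ → ℝ) (congrFun ha i)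
  simp only [Finset.sum_apply, Pi.smul_apply, smul_eq_mul, Function.comp_apply,
    div_mul_eq_mul_div, ← Finset.sum_div]
  rw [eq_div_iff (Int.cast_ne_zero.2 hc), hci, mul_comm]

theorem Module.Basis.repr_eq_of_intCast_eq_sum [Fintype κ] (b : Basis κ ℤ (κ → ℤ)) (f : ι ↪ κ)
    {z : κ → ℤ} {lam : ι → ℝ} (hz : Int.cast ∘ z = ∑ k, lam k • (Int.cast ∘ b (f k) : κ → ℝ))
    (k : ι) : lam k = b.repr z (f k) := by
  classical
  have := congrArg (b.coord (f k)).realExtension hz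
  simp only [LinearMap.realExtension_intCast, map_sum, map_smul, Basis.coord_apply,
    Basis.repr_self, Finsupp.single_apply, EmbeddingLike.apply_eq_iff_eq] at this
  simpa using this.symm

theorem isEmptyParallelepiped_of_basis [Fintype κ] {w : ι → κ → ℤ} (b : Basis κ ℤ (κ → ℤ))
    (f : ι ↪ κ) (hbw : ∀ k, b (f k) = w k) : IsEmptyParallelepiped w := by
  intro z lam hlam hz
  simp only [← hbw] at hz
  have hlam0 : ∀ k, lam k = 0 := fun k => by
    obtain ⟨h0, h1⟩ := hlam k
    rw [b.repr_eq_of_intCast_eq_sum f hz k] at h0 h1 ⊢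
    have h0 : 0 ≤ b.repr z (f k) := by exact_mod_cast h0
    have h1 : b.repr z (f k) < 1 := by exact_mod_cast h1
    exact_mod_cast (show b.repr z (f k) = 0 by omega)
  funext i
  simpa [hlam0] using congrFun hz i

theorem isEmptyParallelepiped_iff_exists_basis [Fintype κ] {w : ι → κ → ℤ}
    (hw : LinearIndependent ℝ fun k => (Int.cast ∘ w k : κ → ℝ)) :
    IsEmptyParallelepiped w ↔ ∃ (b : Basis κ ℤ (κ → ℤ)) (f : ι ↪ κ), ∀ k, b (f k) = w k := by
  refine ⟨fun h => ?_, fun ⟨b, f, hb⟩ => isEmptyParallelepiped_of_basis b f hb⟩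
  have := h.isTorsionFree_quotient
  exact Basis.exists_extending_of_isTorsionFree_quotient (by simp) hw.of_intCast

end IntegerLattice

theorem IsRationalPoint.den_spec {n : ℕ} {y : Fin n → ℝ} (hy : IsRationalPoint y) :
    0 < den y ∧ ∀ i, ∃ m : ℤ, (den y : ℝ) * y i = m := by
  refine Nat.sInf_mem (s := {d : ℕ | 0 < d ∧ ∀ i, ∃ m : ℤ, (d : ℝ) * y i = m}) ?_
  choose q hq using hy
  refine ⟨∏ i, (q i).den, Finset.prod_pos fun i _ => (q i).pos, fun i => ?_⟩
  obtain ⟨c, hc⟩ : (q i).den ∣ ∏ j, (q j).den := Finset.dvd_prod_of_mem _ (Finset.mem_univ i)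
  have hnum : ((q i : ℝ)) * (q i).den = (q i).num := by exact_mod_cast Rat.mul_den_eq_num (q i)
  exact ⟨c * (q i).num, by rw [hq, hc]; push_cast; linear_combination (c : ℝ) * hnum⟩

theorem IsRationalPoint.exists_intCast_eq_tildeR {n : ℕ} {y : Fin n → ℝ}
    (hy : IsRationalPoint y) : ∃ w : Fin (n + 1) → ℤ, Int.cast ∘ w = tildeR y := by
  choose c hc using hy.den_spec.2
  refine ⟨Fin.snoc c (den y : ℤ), funext fun i => ?_⟩
  refine Fin.lastCases ?_ (fun j => ?_) i <;> simp [tildeR, hc]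

theorem linearIndependent_tildeR {n m : ℕ} {v : Fin (m + 1) → Fin n → ℝ}
    (hrat : ∀ k, IsRationalPoint (v k)) (haff : AffineIndependent ℝ v) :
    LinearIndependent ℝ fun k => tildeR (v k) := by
  rw [Fintype.linearIndependent_iff]
  intro g hg k
  have hlast := congrFun hg (Fin.last n)
  have hinit : ∀ i : Fin n, (∑ k, g k • tildeR (v k)) (Fin.castSucc i) = 0 :=
    fun i => congrFun hg (Fin.castSucc i)
  simp only [Finset.sum_apply, Pi.smul_apply, smul_eq_mul, Pi.zero_apply, tildeR,
    Fin.snoc_last, Fin.snoc_castSucc, mul_one] at hlast hinit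
  -- `∑ gₖ ṽₖ = 0` says that the weights `gₖ den(vₖ)` form an affine dependence of the `vₖ`
  have hdep := affineIndependent_iff.1 haff Finset.univ (fun k => g k * den (v k)) hlast
    (funext fun i => by simpa [Finset.sum_apply, mul_assoc] using hinit i) k (Finset.mem_univ k)
  exact (mul_eq_zero.1 hdep).resolve_right (by exact_mod_cast (hrat k).den_spec.1.ne')

theorem regular_iff_parallelepiped_general (n m : ℕ)
    (v : Fin (m + 1) → (Fin n → ℝ))
    (hrat : ∀ k, IsRationalPoint (v k)) (haff : AffineIndependent ℝ v) :
    IsRegularSimplex v ↔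
      ∀ z : Fin (n + 1) → ℝ, (∀ i, ∃ c : ℤ, z i = (c : ℝ)) → z ≠ 0 →
        ¬ ∃ lam : Fin (m + 1) → ℝ, (∀ k, 0 ≤ lam k ∧ lam k < 1) ∧
          z = ∑ k, lam k • tildeR (v k) := by
  choose w hw using fun k => (hrat k).exists_intCast_eq_tildeR
  have hli : LinearIndependent ℝ fun k => (Int.cast ∘ w k : Fin (n + 1) → ℝ) := by
    simpa only [hw] using linearIndependent_tildeR hrat haff
  have hreg : IsRegularSimplex v ↔
      ∃ (b : Basis (Fin (n + 1)) ℤ (Fin (n + 1) → ℤ)) (f : Fin (m + 1) ↪ Fin (n + 1)),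
        ∀ k, b (f k) = w k := by
    simp only [IsRegularSimplex, haff, hrat, ← hw, Function.comp_apply, Int.cast_inj,
      ← funext_iff, implies_true, true_and]
  simp only [← hw]
  rw [hreg, ← isEmptyParallelepiped_iff, isEmptyParallelepiped_iff_exists_basis hli]

/-- An `m`-simplex `T = conv(v₀,…,v_m) ⊆ ℝⁿ` with rational vertices
is regular iff the half-open parallelepiped
`P_T = {Σ λᵢ ṽᵢ : 0 ≤ λᵢ < 1} ⊆ ℝ^{n+1}` contains no nonzero integer point. -/
theorem regular_iff_parallelepiped (n m : ℕ) (hn : 1 ≤ n) (hm : m ≤ n)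
    (v : Fin (m + 1) → (Fin n → ℝ))
    (hrat : ∀ k, IsRationalPoint (v k)) (haff : AffineIndependent ℝ v) :
    IsRegularSimplex v ↔
      ∀ z : Fin (n + 1) → ℝ, (∀ i, ∃ c : ℤ, z i = (c : ℝ)) → z ≠ 0 →
        ¬ ∃ lam : Fin (m + 1) → ℝ, (∀ k, 0 ≤ lam k ∧ lam k < 1) ∧
          z = ∑ k, lam k • tildeR (v k) :=
  regular_iff_parallelepiped_general n m v hrat haff
end

section
/- Let d and c be integers ≥ 1 such that either (i) d ∈ {1,2,3,4} and c = 1, or (ii) d ≥ 5, c < d/2, and gcd(d,c) = 1. Then the Farey sequence 𝔉_d contains a pair of rationals p/d and q/c (in lowest terms) such that q/c = comp(p/d). -/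
/-! Choose `p` with `p c ≡ -1 (mod d)` and set `q = (p c + 1) / d`, so that `q d - p c = 1`.
A rational strictly between `a/b` and `a'/b'` with `a' b - a b' = 1` has denominator at least
`b + b'`. Hence in `𝔉_d` the right neighbor of `p/d` is `q/c` and its left neighbor is
`(p - q)/(d - c)`, and `2 c < d` says that `q/c` is the one with the smaller denominator.
For `d ≤ 2` the companion is given by the exceptional clauses of its definition. -/

lemma Rat.den_intCast_div_natCast_of_isCoprime {a : ℤ} {b : ℕ} (hb : 0 < b)
    (h : IsCoprime a b) : (a / b : ℚ).den = b := by
  have := Rat.den_div_eq_of_coprime (Int.natCast_pos.2 hb) (Int.isCoprime_iff_gcd_eq_one.1 h)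
  exact_mod_cast this

lemma add_le_den_of_mem_Ioo {a c : ℤ} {b e : ℕ} (hb : 0 < b) (he : 0 < e)
    (hdet : c * b - a * e = 1) {t : ℚ} (hat : (a / b : ℚ) < t) (htc : t < c / e) :
    b + e ≤ t.den := by
  have ht := t.den_pos
  rw [← t.num_div_den, div_lt_div_iff₀ (by positivity) (by positivity)] at hat htc
  have hleft : 1 ≤ t.num * b - a * t.den := by
    have : a * (t.den : ℤ) < t.num * b := by exact_mod_cast hat
    omega
  have hright : 1 ≤ c * t.den - t.num * e := by
    have : t.num * (e : ℤ) < c * t.den := by exact_mod_cast htc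
    omega
  -- `t.den = t.den (c b - a e)` splits as a nonnegative combination of the two gaps.
  have hsplit : (t.den : ℤ) = b * (c * t.den - t.num * e) + e * (t.num * b - a * t.den) := by
    linear_combination (-(t.den : ℤ)) * hdet
  have : (b : ℤ) + e ≤ t.den := by nlinarith
  exact_mod_cast this

lemma inFarey_div {n : ℕ} {a : ℤ} {b : ℕ} (hb : 0 < b) (hcop : IsCoprime a b) (ha : 0 ≤ a)
    (hab : a ≤ b) (hbn : b ≤ n) : InFarey n (a / b) := by
  refine ⟨by positivity, div_le_one_of_le₀ (by exact_mod_cast hab) (Nat.cast_nonneg b), ?_⟩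
  rwa [Rat.den_intCast_div_natCast_of_isCoprime hb hcop]

lemma FareyNeighbor.symm {n : ℕ} {x y : ℚ} (h : FareyNeighbor n x y) : FareyNeighbor n y x :=
  ⟨h.2.1, h.1, h.2.2.1.symm, fun t ht => by rw [min_comm, max_comm]; exact h.2.2.2 t ht⟩

lemma div_lt_div_of_mul_sub_mul_eq_one {a c : ℤ} {b e : ℕ} (hb : 0 < b) (he : 0 < e)
    (hdet : c * b - a * e = 1) : (a / b : ℚ) < c / e := by
  rw [div_lt_div_iff₀ (by positivity) (by positivity)]
  exact_mod_cast (by linarith : a * (e : ℤ) < c * b)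

lemma fareyNeighbor_div {n : ℕ} {a c : ℤ} {b e : ℕ} (hb : 0 < b) (he : 0 < e)
    (hdet : c * b - a * e = 1) (ha : 0 ≤ a) (hce : c ≤ e) (hbn : b ≤ n) (hen : e ≤ n)
    (hn : n < b + e) : FareyNeighbor n (a / b) (c / e) := by
  have hlt := div_lt_div_of_mul_sub_mul_eq_one hb he hdet
  have hab : a ≤ b := by nlinarith
  refine ⟨inFarey_div hb ⟨-e, c, by linear_combination hdet⟩ ha hab hbn,
    inFarey_div he ⟨b, -a, by linear_combination hdet⟩ (by nlinarith) hce hen, hlt.ne, ?_⟩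
  rintro t ht ⟨htl, htr⟩
  rw [min_eq_left hlt.le] at htl
  rw [max_eq_right hlt.le] at htr
  have := add_le_den_of_mem_Ioo hb he hdet htl htr
  have := ht.2.2
  omega

lemma FareyNeighbor.eq_of_lt_iff_lt {n : ℕ} {x y z : ℚ} (hy : FareyNeighbor n x y)
    (hz : FareyNeighbor n x z) (hside : x < y ↔ x < z) : y = z := by
  by_contra hne
  wlog hyz : y < z generalizing y z
  · exact this hz hy hside.symm (Ne.symm hne) (lt_of_le_of_ne (not_lt.1 hyz) (Ne.symm hne))
  by_cases hxy : x < y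
  · exact hz.2.2.2 y hy.2.1 ⟨(min_le_left _ _).trans_lt hxy, hyz.trans_le (le_max_right _ _)⟩
  · have hyx : y < x := lt_of_le_of_ne (not_lt.1 hxy) hy.2.2.1.symm
    have hzx : z < x := lt_of_le_of_ne (not_lt.1 (hside.not.1 hxy)) hz.2.2.1.symm
    exact hy.2.2.2 z hz.2.1 ⟨(min_le_right _ _).trans_lt hyz, hzx.trans_le (le_max_left _ _)⟩

lemma isCompanion_of_fareyNeighbor {n : ℕ} {w x y : ℚ} (hxn : x.den = n) (hn : 3 ≤ n)
    (hw : FareyNeighbor n x w) (hy : FareyNeighbor n x y) (hwx : w < x) (hxy : x < y)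
    (hden : y.den < w.den) : IsCompanion x y := by
  subst hxn
  refine Or.inr (Or.inr (Or.inr ⟨hn, hy, fun z hz hzy => ?_⟩))
  by_cases hxz : x < z
  · exact absurd (hy.eq_of_lt_iff_lt hz (iff_of_true hxy hxz)).symm hzy
  · rwa [← hw.eq_of_lt_iff_lt hz (iff_of_false hwx.asymm hxz)]

lemma exists_mul_sub_mul_eq_one {d c : ℕ} (hd : 0 < d) (hcop : d.Coprime c) :
    ∃ p q : ℤ, 0 ≤ p ∧ p < d ∧ q * d - p * c = 1 := by
  obtain ⟨u, v, huv⟩ := Nat.isCoprime_iff_coprime.2 hcop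
  have hd' : (0 : ℤ) < d := by exact_mod_cast hd
  refine ⟨-v % d, ?_⟩
  have : (-v % d) * c + 1 ≡ 0 [ZMOD d] :=
    calc (-v % d) * c + 1 ≡ -v * c + 1 [ZMOD d] := ((Int.mod_modEq _ _).mul_right _).add_right _
      _ = u * d := by linear_combination -huv
      _ ≡ 0 [ZMOD d] := Int.modEq_zero_iff_dvd.2 (dvd_mul_left _ _)
  obtain ⟨q, hq⟩ := Int.modEq_zero_iff_dvd.1 this
  exact ⟨q, Int.emod_nonneg _ hd'.ne', Int.emod_lt_of_pos _ hd', by linear_combination -hq⟩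

lemma exists_companion_of_coprime {d c : ℕ} (hc : 0 < c) (hcd : 2 * c < d)
    (hcop : d.Coprime c) :
    ∃ x y : ℚ, x ∈ Set.Icc (0 : ℚ) 1 ∧ y ∈ Set.Icc (0 : ℚ) 1 ∧
      x.den = d ∧ y.den = c ∧ IsCompanion x y := by
  obtain ⟨p, q, hp0, hpd, hdet⟩ := exists_mul_sub_mul_eq_one (by omega) hcop
  obtain ⟨e, rfl⟩ : ∃ e, d = c + e := ⟨d - c, by omega⟩
  have hce : c < e := by omega
  push_cast at hpd hdet
  have hp : 1 ≤ p := by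
    by_contra! hp
    obtain rfl : p = 0 := by omega
    have : (c + e : ℤ) ∣ 1 := Dvd.intro_left q (by linear_combination hdet)
    have := Int.le_of_dvd one_pos this
    omega
  have hq : q ≤ c := by nlinarith
  have hpq : 0 ≤ p - q := by nlinarith
  have hdet' : p * e - (p - q) * (c + e : ℕ) = 1 := by push_cast; linear_combination hdet
  have hright := fareyNeighbor_div (n := c + e) (by omega) hc hdet hp0 hq (by omega) (by omega)
    (by omega)
  have hleft := fareyNeighbor_div (n := c + e) (by omega) (by omega) hdet' hpq hpd.le
    (by omega) le_rfl (by omega)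
  have hxden : (p / (c + e : ℕ) : ℚ).den = c + e :=
    Rat.den_intCast_div_natCast_of_isCoprime (by omega)
      ⟨-c, q, by push_cast; linear_combination hdet⟩
  have hyden : (q / c : ℚ).den = c :=
    Rat.den_intCast_div_natCast_of_isCoprime hc ⟨c + e, -p, by linear_combination hdet⟩
  have hwden : ((p - q : ℤ) / e : ℚ).den = e :=
    Rat.den_intCast_div_natCast_of_isCoprime (by omega)
      ⟨-(c + e : ℕ), p, by linear_combination hdet'⟩
  refine ⟨_, _, ⟨hright.1.1, hright.1.2.1⟩, ⟨hright.2.1.1, hright.2.1.2.1⟩, hxden, hyden,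
    isCompanion_of_fareyNeighbor hxden (by omega) hleft.symm hright
      (div_lt_div_of_mul_sub_mul_eq_one (by omega) (by omega) hdet')
      (div_lt_div_of_mul_sub_mul_eq_one (by omega) hc hdet) (by omega)⟩

/-- If `d, c ≥ 1` and either (`d ≤ 4` and `c = 1`) or (`d ≥ 5`,
`c < d/2`, `gcd(d,c) = 1`), then `𝔉_d` contains rationals `p/d` and `q/c` (in lowest
terms) with `q/c = comp(p/d)`. -/
theorem exists_companion_pair (d c : ℕ) (hd : 1 ≤ d) (hc : 1 ≤ c)
    (h : (d ≤ 4 ∧ c = 1) ∨ (5 ≤ d ∧ 2 * c < d ∧ Nat.gcd d c = 1)) :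
    ∃ x y : ℚ, x ∈ Set.Icc (0 : ℚ) 1 ∧ y ∈ Set.Icc (0 : ℚ) 1 ∧
      x.den = d ∧ y.den = c ∧ IsCompanion x y := by
  rcases h with ⟨hd4, rfl⟩ | ⟨-, hcd, hcop⟩
  · interval_cases d
    · exact ⟨0, 1, by norm_num, by norm_num, rfl, rfl, Or.inl ⟨rfl, rfl⟩⟩
    · exact ⟨1 / 2, 1, by norm_num, by norm_num, by norm_num, rfl,
        Or.inr (Or.inr (Or.inl ⟨rfl, rfl⟩))⟩
    · exact exists_companion_of_coprime one_pos (by norm_num) (by norm_num)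
    · exact exists_companion_of_coprime one_pos (by norm_num) (by norm_num)
  · exact exists_companion_of_coprime hc hcd hcop
end
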